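/- Let k be a field of characteristic zero, q ∈ k not a root of unity, and σ(h) = qh. For a/c ∈ k[h] with (a/c)(0) ≠ 0 and deg(a/c) = N − M ≥ 1, the cokernel of ψ : f ↦ (σ − q)((a/c)·f) on k[h] has dimension N − M over k. -/

import Mathlib

open Polynomial

private lemma coeff_comp_CqX {k : Type*} [CommRing k] (q : k) (g : k[X]) (n : ℕ) :
    (g.comp (C q * X)).coeff n = q ^ n * g.coeff n := by
  induction g using Polynomial.induction_on' with
  | add f g hf hg => simp [add_comp, hf, hg, mul_add]
  | monomial i a =>
      rw [monomial_comp, mul_pow, ← C_pow, ← mul_assoc, ← C_mul, coeff_C_mul_X_pow,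
        coeff_monomial]
      rcases eq_or_ne n i with h | h
      · subst h; simp [mul_comm]
      · simp [h, Ne.symm h]

/-- For `q` not a root of unity, `σ(h) = qh`, and `p ∈ k[h]` with `p(0) ≠ 0`
and `deg p = d ≥ 1`, the cokernel of the map `ψ : f ↦ σ(p·f) − q·(p·f)` on
`k[h]` has dimension `d` over `k`. -/
theorem coker_psi_q_not_root_of_unity (k : Type*) [Field k] [CharZero k]
    (q : k) (hq0 : q ≠ 0) (hq : ∀ n : ℕ, 0 < n → q ^ n ≠ 1)
    (p : k[X]) (h0 : p.eval 0 ≠ 0) (hdeg : 1 ≤ p.natDegree) :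
    Module.finrank k
        (k[X] ⧸ Submodule.span k
          (Set.range fun f : k[X] => (p * f).comp (C q * X) - q • (p * f)))
      = p.natDegree := by
  classical
  set d := p.natDegree with hd
  set ψ : k[X] → k[X] := fun f => (p * f).comp (C q * X) - q • (p * f) with hψ
  have hcoeff : ∀ (f : k[X]) (n : ℕ), (ψ f).coeff n = (q ^ n - q) * (p * f).coeff n := by
    intro f n
    simp only [hψ, coeff_sub, coeff_comp_CqX, coeff_smul, smul_eq_mul, sub_mul]
  have hp0 : p.coeff 0 ≠ 0 := by rwa [coeff_zero_eq_eval_zero]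
  have hpne : p ≠ 0 := fun h => hp0 (by simp [h])
  have hq1 : q ≠ 1 := by simpa using hq 1 one_pos
  have h1q : (1 : k) - q ≠ 0 := sub_ne_zero.mpr (fun h => hq1 h.symm)
  have hqn : ∀ n : ℕ, 2 ≤ n → q ^ n - q ≠ 0 := by
    intro n hn h
    apply hq (n - 1) (by omega)
    have h1 : q ^ (n - 1) * q = 1 * q := by
      rw [one_mul, ← pow_succ, show n - 1 + 1 = n by omega]
      exact sub_eq_zero.mp h
    exact mul_right_cancel₀ hq0 h1
  let L : k[X] →ₗ[k] k[X] :=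
    { toFun := ψ
      map_add' := fun f g => by
        ext n
        simp only [hcoeff, mul_add, coeff_add]
      map_smul' := fun a f => by
        ext n
        simp only [RingHom.id_apply, hcoeff, coeff_smul, smul_eq_mul, mul_smul_comm]
        ring }
  have hLcoeff : ∀ (f : k[X]) (n : ℕ), (L f).coeff n = (q ^ n - q) * (p * f).coeff n :=
    fun f n => hcoeff f n
  have hS : Submodule.span k (Set.range ψ) = LinearMap.range L := by
    refine le_antisymm (Submodule.span_le.mpr ?_) ?_
    · rintro x ⟨f, rfl⟩; exact ⟨f, rfl⟩
    · rintro x ⟨f, rfl⟩; exact Submodule.subset_span ⟨f, rfl⟩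
  let W : Submodule k k[X] :=
    { carrier := {w | w.coeff 0 = 0 ∧ ∀ m, d < m → w.coeff m = 0}
      add_mem' := fun ha hb =>
        ⟨by simp [coeff_add, ha.1, hb.1],
         fun m hm => by simp [coeff_add, ha.2 m hm, hb.2 m hm]⟩
      zero_mem' := ⟨by simp, fun m hm => by simp⟩
      smul_mem' := fun c x hx =>
        ⟨by simp [coeff_smul, hx.1], fun m hm => by simp [coeff_smul, hx.2 m hm]⟩ }
  have hWmem : ∀ w : k[X], w ∈ W ↔ w.coeff 0 = 0 ∧ ∀ m, d < m → w.coeff m = 0 :=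
    fun _ => Iff.rfl
  -- Disjointness
  have hdisj : Disjoint (LinearMap.range L) W := by
    rw [disjoint_iff, eq_bot_iff]
    rintro x hx
    obtain ⟨hxL, hxW⟩ := Submodule.mem_inf.mp hx
    obtain ⟨f, rfl⟩ := hxL
    obtain ⟨hw0, hwt⟩ := (hWmem _).mp hxW
    rw [Submodule.mem_bot]
    rcases eq_or_ne f 0 with rfl | hf
    · simp
    exfalso
    have hf0 : f.coeff 0 = 0 := by
      rw [hLcoeff, pow_zero, mul_coeff_zero] at hw0
      rcases mul_eq_zero.mp hw0 with h | h
      · exact absurd h h1q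
      · rcases mul_eq_zero.mp h with h' | h'
        · exact absurd h' hp0
        · exact h'
    have hfd : 1 ≤ f.natDegree := by
      by_contra h
      push_neg at h
      have heq : f = C (f.coeff 0) := eq_C_of_natDegree_eq_zero (by omega)
      rw [hf0, map_zero] at heq
      exact hf heq
    have hm : (p * f).natDegree = d + f.natDegree := natDegree_mul hpne hf
    have hz := hwt (p * f).natDegree (by omega)
    rw [hLcoeff] at hz
    rcases mul_eq_zero.mp hz with h | h
    · exact hqn _ (by omega) h
    · exact leadingCoeff_ne_zero.mpr (mul_ne_zero hpne hf) h
  -- Constants lie in the sup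
  have hconst : ∀ a : k, C a ∈ LinearMap.range L ⊔ W := by
    have key : C ((1 - q) * p.coeff 0) ∈ LinearMap.range L ⊔ W := by
      have h1 : (L 1 - C ((1 - q) * p.coeff 0)) ∈ W := by
        rw [hWmem]
        constructor
        · simp [hLcoeff]
        · intro m hm
          rw [coeff_sub, hLcoeff, mul_one,
            coeff_eq_zero_of_natDegree_lt (show p.natDegree < m from hm),
            coeff_C, if_neg (show m ≠ 0 by omega)]
          ring
      have heq : C ((1 - q) * p.coeff 0) = L 1 - (L 1 - C ((1 - q) * p.coeff 0)) := by
        ring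
      rw [heq]
      exact Submodule.sub_mem _ (Submodule.mem_sup_left ⟨1, rfl⟩)
        (Submodule.mem_sup_right h1)
    intro a
    have hne : (1 - q) * p.coeff 0 ≠ 0 := mul_ne_zero h1q hp0
    have heq : C a = (a / ((1 - q) * p.coeff 0)) • C ((1 - q) * p.coeff 0) := by
      rw [smul_C, smul_eq_mul]
      congr 1
      field_simp
    rw [heq]
    exact Submodule.smul_mem _ _ key
  -- Codisjointness
  have hsup : LinearMap.range L ⊔ W = ⊤ := by
    rw [eq_top_iff]
    rintro g -
    suffices H : ∀ n (g : k[X]), g.natDegree ≤ n → g ∈ LinearMap.range L ⊔ W from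
      H g.natDegree g le_rfl
    intro n
    induction n using Nat.strong_induction_on with
    | _ n IH =>
      intro g hg
      by_cases hgd : g.natDegree ≤ d
      · have hwmem : g - C (g.coeff 0) ∈ W := by
          rw [hWmem]
          refine ⟨by simp, fun m hm => ?_⟩
          rw [coeff_sub, coeff_eq_zero_of_natDegree_lt (lt_of_le_of_lt hgd hm),
            coeff_C, if_neg (show m ≠ 0 by omega)]
          ring
        have heq : g = C (g.coeff 0) + (g - C (g.coeff 0)) := by ring
        rw [heq]
        exact Submodule.add_mem _ (hconst _) (Submodule.mem_sup_right hwmem)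
      · push_neg at hgd
        have hgne : g ≠ 0 := fun h => by rw [h, natDegree_zero] at hgd; omega
        set m := g.natDegree with hmdef
        have hqm : q ^ m - q ≠ 0 := hqn m (by omega)
        have hlp : p.leadingCoeff ≠ 0 := leadingCoeff_ne_zero.mpr hpne
        set c := g.leadingCoeff / (p.leadingCoeff * (q ^ m - q)) with hc
        have hcne : c ≠ 0 := div_ne_zero (leadingCoeff_ne_zero.mpr hgne)
          (mul_ne_zero hlp hqm)
        set f := C c * X ^ (m - d) with hfdef
        have hfne : f ≠ 0 := mul_ne_zero (by simpa using hcne) (pow_ne_zero _ X_ne_zero)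
        have hfdeg : f.natDegree = m - d := by
          rw [hfdef, natDegree_C_mul_X_pow _ _ hcne]
        have hpfdeg : (p * f).natDegree = m := by
          rw [natDegree_mul hpne hfne, hfdeg]
          omega
        have hftop : f.leadingCoeff = c := by
          rw [hfdef, leadingCoeff_mul_X_pow, leadingCoeff_C]
        have hpftop : (p * f).coeff m = p.leadingCoeff * c := by
          rw [← hpfdeg, coeff_natDegree, leadingCoeff_mul, hftop]
        have hgtop : g.coeff m = g.leadingCoeff := coeff_natDegree
        have hLtop : (L f).coeff m = g.coeff m := by
          rw [hLcoeff, hpftop, hc, hgtop]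
          field_simp
        have hLdeg : (L f).natDegree ≤ m := by
          rw [← hpfdeg]
          exact natDegree_le_iff_coeff_eq_zero.mpr fun N hN => by
            rw [hLcoeff, coeff_eq_zero_of_natDegree_lt hN, mul_zero]
        have hg' : (g - L f).natDegree < m := by
          rcases eq_or_ne (g - L f) 0 with h | h
          · rw [h, natDegree_zero]; omega
          · have hle : (g - L f).natDegree ≤ m :=
              le_trans (natDegree_sub_le _ _) (max_le le_rfl hLdeg)
            have hcm : (g - L f).coeff m = 0 := by rw [coeff_sub, hLtop, sub_self]
            have hne : (g - L f).natDegree ≠ m := by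
              intro he
              rw [← he, coeff_natDegree] at hcm
              exact leadingCoeff_ne_zero.mpr h hcm
            omega
        have hmem := IH (g - L f).natDegree (lt_of_lt_of_le hg' hg) _ le_rfl
        have heq : g = L f + (g - L f) := by ring
        rw [heq]
        exact Submodule.add_mem _ (Submodule.mem_sup_left ⟨f, rfl⟩) hmem
  -- finrank of W
  have hWrank : Module.finrank k W = d := by
    let e : W →ₗ[k] (Fin d → k) :=
      { toFun := fun w i => (w : k[X]).coeff ((i : ℕ) + 1)
        map_add' := fun x y => by ext i; simp
        map_smul' := fun cc x => by ext i; simp }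
    have hinj : Function.Injective e := by
      intro x y hxy
      obtain ⟨hx0, hxt⟩ := (hWmem _).mp x.2
      obtain ⟨hy0, hyt⟩ := (hWmem _).mp y.2
      apply Subtype.ext
      ext nn
      rcases Nat.eq_zero_or_pos nn with rfl | hpos
      · rw [hx0, hy0]
      by_cases hnd : nn ≤ d
      · have hfun := congrFun hxy ⟨nn - 1, by omega⟩
        simpa [e, show nn - 1 + 1 = nn by omega] using hfun
      · rw [hxt nn (by omega), hyt nn (by omega)]
    have hsurj : Function.Surjective e := by
      intro cfun
      refine ⟨⟨∑ i : Fin d, C (cfun i) * X ^ ((i : ℕ) + 1), (hWmem _).mpr ⟨?_, ?_⟩⟩, ?_⟩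
      · rw [finset_sum_coeff]
        apply Finset.sum_eq_zero
        intro i _
        rw [coeff_C_mul_X_pow, if_neg (by omega)]
      · intro m hm
        rw [finset_sum_coeff]
        apply Finset.sum_eq_zero
        intro i _
        rw [coeff_C_mul_X_pow, if_neg (by have := i.2; omega)]
      · funext i
        show (∑ j : Fin d, C (cfun j) * X ^ ((j : ℕ) + 1)).coeff ((i : ℕ) + 1) = cfun i
        rw [finset_sum_coeff, Finset.sum_eq_single i]
        · rw [coeff_C_mul_X_pow, if_pos rfl]
        · intro j _ hji
          rw [coeff_C_mul_X_pow, if_neg]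
          intro h
          exact hji (Fin.ext (by omega))
        · intro h
          exact absurd (Finset.mem_univ i) h
    have := LinearEquiv.finrank_eq (LinearEquiv.ofBijective e ⟨hinj, hsurj⟩)
    rw [this, Module.finrank_fin_fun]
  have hcompl : IsCompl (LinearMap.range L) W := ⟨hdisj, codisjoint_iff.mpr hsup⟩
  rw [hS, LinearEquiv.finrank_eq (Submodule.quotientEquivOfIsCompl _ _ hcompl), hWrank]
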